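/- arXiv:2105.01409 — 3 statements merged into one kernel-verified Lean document; each statement's English description precedes it below -/
import Mathlib

section
/- Let Π be the uniform distribution over all functions from a finite set S to a finite abelian group R, and let h₁, h₂ : D → S be fixed functions such that for a given tuple of distinct queries q₁,…,q_m ∈ D there is no nonempty subset I ⊆ {1,…,m} in which every value in the multiset {h₁(q_i) : i ∈ I} appears an even number of times and every value in {h₂(q_i) : i ∈ I} appears an even number of times. Then, for f₁, f₂ drawn independently and uniformly from all functions S → R, the tuple (f₁(h₁(q₁)) ⊕ f₂(h₂(q₁)), …, f₁(h₁(q_m)) ⊕ f₂(h₂(q_m))) is uniformly distributed over R^m. -/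
open Finset

section PPaux

variable {D S R : Type*} [Fintype S] [DecidableEq S] [AddCommGroup R]

lemma pp_even_card {ι : Type*} [Fintype ι] (P : ι → Prop) [DecidablePred P] (g : ι → ZMod 2)
    (h0 : ∑ i ∈ Finset.univ.filter P, g i = 0) :
    Even ((Finset.univ.filter fun i => P i ∧ g i ≠ 0).card) := by
  classical
  have h1 : ∑ i ∈ (Finset.univ.filter P).filter (fun i => g i ≠ 0), g i = 0 := by
    rw [Finset.sum_filter_ne_zero]; exact h0
  have hone : ∀ x : ZMod 2, x ≠ 0 → x = 1 := by decide
  have hsum1 : ∑ i ∈ (Finset.univ.filter P).filter (fun i => g i ≠ 0), g i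
      = ((((Finset.univ.filter P).filter (fun i => g i ≠ 0)).card : ℕ) : ZMod 2) := by
    rw [Finset.card_eq_sum_ones, Nat.cast_sum]
    refine Finset.sum_congr rfl fun x hx => ?_
    rw [hone _ (Finset.mem_filter.1 hx).2, Nat.cast_one]
  have h2 : ((((Finset.univ.filter P).filter (fun i => g i ≠ 0)).card : ℕ) : ZMod 2) = 0 :=
    hsum1 ▸ h1
  have hdvd := (ZMod.natCast_eq_zero_iff _ 2).1 h2
  obtain ⟨k, hk⟩ := hdvd
  have h3 : Even (((Finset.univ.filter P).filter (fun i => g i ≠ 0)).card) :=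
    ⟨k, by omega⟩
  rwa [Finset.filter_filter] at h3

lemma pp_card_I_filter {m : ℕ} (J : Finset (Fin m)) (g : ↥J → ZMod 2)
    (P : Fin m → Prop) [DecidablePred P] :
    ((((J.attach.filter fun i => g i ≠ 0).image Subtype.val).filter P).card)
      = (Finset.univ.filter fun i : ↥J => P ↑i ∧ g i ≠ 0).card := by
  classical
  rw [Finset.filter_image, Finset.card_image_of_injective _ Subtype.val_injective,
    Finset.filter_filter, ← Finset.univ_eq_attach]
  congr 1
  ext x
  simp [and_comm]

lemma pp_dep {m : ℕ} (h₁ h₂ : D → S) (q : Fin m → D) (J : Finset (Fin m))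
    (hlt : (J.image fun i => h₁ (q i)).card + (J.image fun i => h₂ (q i)).card < J.card) :
    ∃ I : Finset (Fin m), I ⊆ J ∧ I.Nonempty ∧
      (∀ s : S, Even ((I.filter (fun i => h₁ (q i) = s)).card)) ∧
      (∀ s : S, Even ((I.filter (fun i => h₂ (q i) = s)).card)) := by
  classical
  set T : Finset (S ⊕ S) :=
    (J.image fun i => Sum.inl (h₁ (q i))) ∪ (J.image fun i => Sum.inr (h₂ (q i))) with hT
  have hTcard : T.card < J.card := by
    refine lt_of_le_of_lt (Finset.card_union_le _ _) ?_
    have e1 : (J.image fun i => Sum.inl (h₁ (q i)) : Finset (S ⊕ S)).card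
        = (J.image fun i => h₁ (q i)).card := by
      rw [show (fun i => (Sum.inl (h₁ (q i)) : S ⊕ S)) = Sum.inl ∘ (fun i => h₁ (q i)) from rfl,
        ← Finset.image_image, Finset.card_image_of_injective _ Sum.inl_injective]
    have e2 : (J.image fun i => Sum.inr (h₂ (q i)) : Finset (S ⊕ S)).card
        = (J.image fun i => h₂ (q i)).card := by
      rw [show (fun i => (Sum.inr (h₂ (q i)) : S ⊕ S)) = Sum.inr ∘ (fun i => h₂ (q i)) from rfl,
        ← Finset.image_image, Finset.card_image_of_injective _ Sum.inr_injective]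
    rw [e1, e2]; exact hlt
  set v : ↥J → (↥T → ZMod 2) := fun i t =>
    (if (Sum.inl (h₁ (q ↑i)) : S ⊕ S) = ↑t then 1 else 0) +
    (if (Sum.inr (h₂ (q ↑i)) : S ⊕ S) = ↑t then 1 else 0) with hv
  have hnotli : ¬ LinearIndependent (ZMod 2) v := by
    intro hli
    have := hli.fintype_card_le_finrank
    rw [Module.finrank_pi] at this
    simp only [Fintype.card_coe] at this
    omega
  rw [Fintype.not_linearIndependent_iff] at hnotli
  obtain ⟨g, hsum, i₀, hi₀⟩ := hnotli
  set I : Finset (Fin m) := (J.attach.filter fun i => g i ≠ 0).image Subtype.val with hI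
  have hIJ : I ⊆ J := by
    intro x hx
    simp only [hI, Finset.mem_image, Finset.mem_filter] at hx
    obtain ⟨y, _, rfl⟩ := hx; exact y.2
  refine ⟨I, hIJ, ?_, ?_, ?_⟩
  · exact ⟨i₀, Finset.mem_image.2 ⟨i₀, Finset.mem_filter.2 ⟨Finset.mem_attach _ _, hi₀⟩, rfl⟩⟩
  · -- side 1
    intro s
    rcases Finset.eq_empty_or_nonempty (I.filter (fun i => h₁ (q i) = s)) with he | hne
    · rw [he]; exact Even.zero
    · obtain ⟨j, hj⟩ := hne
      rw [Finset.mem_filter] at hj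
      have hjJ : j ∈ J := hIJ hj.1
      have hts : (Sum.inl s : S ⊕ S) ∈ T := by
        rw [hT]
        exact Finset.mem_union.2 (Or.inl (Finset.mem_image.2 ⟨j, hjJ, by rw [hj.2]⟩))
      have h0 := congrFun hsum (⟨Sum.inl s, hts⟩ : ↥T)
      simp only [Finset.sum_apply, Pi.zero_apply, Pi.smul_apply, smul_eq_mul, hv] at h0
      have h0' : ∑ i ∈ Finset.univ.filter (fun i : ↥J => h₁ (q ↑i) = s), g i = 0 := by
        have hcg : ∑ i : ↥J, (if h₁ (q ↑i) = s then g i else 0)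
            = ∑ x : ↥J, g x * ((if Sum.inl (h₁ (q ↑x)) = (Sum.inl s : S ⊕ S) then (1 : ZMod 2) else 0)
              + if Sum.inr (h₂ (q ↑x)) = (Sum.inl s : S ⊕ S) then 1 else 0) := by
          refine Finset.sum_congr rfl fun i _ => ?_
          by_cases hPi : h₁ (q ↑i) = s <;> simp [hPi]
        rw [Finset.sum_filter, hcg, h0]
      have heven := pp_even_card (fun i : ↥J => h₁ (q ↑i) = s) g h0'
      have hcards := pp_card_I_filter J g (fun i => h₁ (q i) = s)
      rw [← hI] at hcards
      rw [hcards]; exact heven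
  · -- side 2
    intro s
    rcases Finset.eq_empty_or_nonempty (I.filter (fun i => h₂ (q i) = s)) with he | hne
    · rw [he]; exact Even.zero
    · obtain ⟨j, hj⟩ := hne
      rw [Finset.mem_filter] at hj
      have hjJ : j ∈ J := hIJ hj.1
      have hts : (Sum.inr s : S ⊕ S) ∈ T := by
        rw [hT]
        exact Finset.mem_union.2 (Or.inr (Finset.mem_image.2 ⟨j, hjJ, by rw [hj.2]⟩))
      have h0 := congrFun hsum (⟨Sum.inr s, hts⟩ : ↥T)
      simp only [Finset.sum_apply, Pi.zero_apply, Pi.smul_apply, smul_eq_mul, hv] at h0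
      have h0' : ∑ i ∈ Finset.univ.filter (fun i : ↥J => h₂ (q ↑i) = s), g i = 0 := by
        have hcg : ∑ i : ↥J, (if h₂ (q ↑i) = s then g i else 0)
            = ∑ x : ↥J, g x * ((if Sum.inl (h₁ (q ↑x)) = (Sum.inr s : S ⊕ S) then (1 : ZMod 2) else 0)
              + if Sum.inr (h₂ (q ↑x)) = (Sum.inr s : S ⊕ S) then 1 else 0) := by
          refine Finset.sum_congr rfl fun i _ => ?_
          by_cases hPi : h₂ (q ↑i) = s <;> simp [hPi]
        rw [Finset.sum_filter, hcg, h0]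
      have heven := pp_even_card (fun i : ↥J => h₂ (q ↑i) = s) g h0'
      have hcards := pp_card_I_filter J g (fun i => h₂ (q i) = s)
      rw [← hI] at hcards
      rw [hcards]; exact heven

/-- Leaf lemma: some query has a private hash value within `J`. -/
lemma pp_leaf {m : ℕ} (h₁ h₂ : D → S) (q : Fin m → D)
    (hindep : ∀ I : Finset (Fin m), I.Nonempty →
      ¬ ((∀ s : S, Even ((I.filter (fun i => h₁ (q i) = s)).card)) ∧
         (∀ s : S, Even ((I.filter (fun i => h₂ (q i) = s)).card))))
    (J : Finset (Fin m)) (hJ : J.Nonempty) :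
    (∃ i ∈ J, (J.filter fun j => h₁ (q j) = h₁ (q i)).card = 1) ∨
    (∃ i ∈ J, (J.filter fun j => h₂ (q j) = h₂ (q i)).card = 1) := by
  classical
  by_contra hcon
  push_neg at hcon
  obtain ⟨hc1, hc2⟩ := hcon
  set T₁ := J.image fun i => h₁ (q i) with hT1
  set T₂ := J.image fun i => h₂ (q i) with hT2
  have hd1 : ∀ s ∈ T₁, 2 ≤ (J.filter fun j => h₁ (q j) = s).card := by
    intro s hs
    obtain ⟨i, hi, rfl⟩ := Finset.mem_image.1 hs
    have h1 : i ∈ J.filter fun j => h₁ (q j) = h₁ (q i) := Finset.mem_filter.2 ⟨hi, rfl⟩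
    have := Finset.card_pos.2 ⟨i, h1⟩
    have := hc1 i hi
    omega
  have hd2 : ∀ s ∈ T₂, 2 ≤ (J.filter fun j => h₂ (q j) = s).card := by
    intro s hs
    obtain ⟨i, hi, rfl⟩ := Finset.mem_image.1 hs
    have h1 : i ∈ J.filter fun j => h₂ (q j) = h₂ (q i) := Finset.mem_filter.2 ⟨hi, rfl⟩
    have := Finset.card_pos.2 ⟨i, h1⟩
    have := hc2 i hi
    omega
  have hsum1 : J.card = ∑ s ∈ T₁, (J.filter fun j => h₁ (q j) = s).card :=
    Finset.card_eq_sum_card_fiberwise (fun i hi => Finset.mem_image.2 ⟨i, hi, rfl⟩)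
  have hsum2 : J.card = ∑ s ∈ T₂, (J.filter fun j => h₂ (q j) = s).card :=
    Finset.card_eq_sum_card_fiberwise (fun i hi => Finset.mem_image.2 ⟨i, hi, rfl⟩)
  have hge1 : 2 * T₁.card ≤ J.card := by
    rw [hsum1]
    calc 2 * T₁.card = ∑ _s ∈ T₁, 2 := by rw [Finset.sum_const, smul_eq_mul, mul_comm]
    _ ≤ _ := Finset.sum_le_sum hd1
  have hge2 : 2 * T₂.card ≤ J.card := by
    rw [hsum2]
    calc 2 * T₂.card = ∑ _s ∈ T₂, 2 := by rw [Finset.sum_const, smul_eq_mul, mul_comm]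
    _ ≤ _ := Finset.sum_le_sum hd2
  by_cases hall : (∀ s ∈ T₁, (J.filter fun j => h₁ (q j) = s).card = 2) ∧
      (∀ s ∈ T₂, (J.filter fun j => h₂ (q j) = s).card = 2)
  · refine hindep J hJ ⟨fun s => ?_, fun s => ?_⟩
    · by_cases hs : s ∈ T₁
      · rw [hall.1 s hs]; exact even_two
      · have : (J.filter fun j => h₁ (q j) = s) = ∅ := by
          rw [Finset.filter_eq_empty_iff]
          intro j hj hjs
          exact hs (Finset.mem_image.2 ⟨j, hj, hjs⟩)
        rw [this]; exact Even.zero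
    · by_cases hs : s ∈ T₂
      · rw [hall.2 s hs]; exact even_two
      · have : (J.filter fun j => h₂ (q j) = s) = ∅ := by
          rw [Finset.filter_eq_empty_iff]
          intro j hj hjs
          exact hs (Finset.mem_image.2 ⟨j, hj, hjs⟩)
        rw [this]; exact Even.zero
  · have hlt : T₁.card + T₂.card < J.card := by
      rw [not_and_or] at hall
      rcases hall with h | h
      · push_neg at h
        obtain ⟨s, hs, hne⟩ := h
        have h3 : 2 * T₁.card < J.card := by
          rw [hsum1]
          have : ∑ _s ∈ T₁, 2 < ∑ s ∈ T₁, (J.filter fun j => h₁ (q j) = s).card :=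
            Finset.sum_lt_sum hd1 ⟨s, hs, lt_of_le_of_ne (hd1 s hs) (Ne.symm hne)⟩
          calc 2 * T₁.card = ∑ _s ∈ T₁, 2 := by rw [Finset.sum_const, smul_eq_mul, mul_comm]
          _ < _ := this
        omega
      · push_neg at h
        obtain ⟨s, hs, hne⟩ := h
        have h3 : 2 * T₂.card < J.card := by
          rw [hsum2]
          have : ∑ _s ∈ T₂, 2 < ∑ s ∈ T₂, (J.filter fun j => h₂ (q j) = s).card :=
            Finset.sum_lt_sum hd2 ⟨s, hs, lt_of_le_of_ne (hd2 s hs) (Ne.symm hne)⟩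
          calc 2 * T₂.card = ∑ _s ∈ T₂, 2 := by rw [Finset.sum_const, smul_eq_mul, mul_comm]
          _ < _ := this
        omega
    obtain ⟨I, hIJ, hIne, he1, he2⟩ := pp_dep h₁ h₂ q J hlt
    exact hindep I hIne ⟨he1, he2⟩

/-- Surjectivity by leaf peeling. -/
lemma pp_surj {m : ℕ} (h₁ h₂ : D → S) (q : Fin m → D)
    (hindep : ∀ I : Finset (Fin m), I.Nonempty →
      ¬ ((∀ s : S, Even ((I.filter (fun i => h₁ (q i) = s)).card)) ∧
         (∀ s : S, Even ((I.filter (fun i => h₂ (q i) = s)).card))))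
    (J : Finset (Fin m)) (w : Fin m → R) :
    ∃ f₁ f₂ : S → R, ∀ i ∈ J, f₁ (h₁ (q i)) + f₂ (h₂ (q i)) = w i := by
  classical
  induction J using Finset.strongInduction with
  | _ J ih =>
    rcases J.eq_empty_or_nonempty with rfl | hne
    · exact ⟨0, 0, by simp⟩
    rcases pp_leaf h₁ h₂ q hindep J hne with ⟨i, hi, hcnt⟩ | ⟨i, hi, hcnt⟩
    · obtain ⟨f₁, f₂, hf⟩ := ih (J.erase i) (Finset.erase_ssubset hi)
      have hpriv : ∀ j ∈ J, j ≠ i → h₁ (q j) ≠ h₁ (q i) := by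
        intro j hj hji heq
        obtain ⟨a, ha⟩ := Finset.card_eq_one.1 hcnt
        have hjmem : j ∈ J.filter fun k => h₁ (q k) = h₁ (q i) :=
          Finset.mem_filter.2 ⟨hj, heq⟩
        have himem : i ∈ J.filter fun k => h₁ (q k) = h₁ (q i) :=
          Finset.mem_filter.2 ⟨hi, rfl⟩
        rw [ha, Finset.mem_singleton] at hjmem himem
        exact hji (hjmem.trans himem.symm)
      refine ⟨Function.update f₁ (h₁ (q i)) (w i - f₂ (h₂ (q i))), f₂, ?_⟩
      intro j hj
      by_cases hji : j = i
      · subst hji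
        rw [Function.update_self]
        abel
      · rw [Function.update_of_ne (hpriv j hj hji)]
        exact hf j (Finset.mem_erase.2 ⟨hji, hj⟩)
    · obtain ⟨f₁, f₂, hf⟩ := ih (J.erase i) (Finset.erase_ssubset hi)
      have hpriv : ∀ j ∈ J, j ≠ i → h₂ (q j) ≠ h₂ (q i) := by
        intro j hj hji heq
        obtain ⟨a, ha⟩ := Finset.card_eq_one.1 hcnt
        have hjmem : j ∈ J.filter fun k => h₂ (q k) = h₂ (q i) :=
          Finset.mem_filter.2 ⟨hj, heq⟩
        have himem : i ∈ J.filter fun k => h₂ (q k) = h₂ (q i) :=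
          Finset.mem_filter.2 ⟨hi, rfl⟩
        rw [ha, Finset.mem_singleton] at hjmem himem
        exact hji (hjmem.trans himem.symm)
      refine ⟨f₁, Function.update f₂ (h₂ (q i)) (w i - f₁ (h₁ (q i))), ?_⟩
      intro j hj
      by_cases hji : j = i
      · subst hji
        rw [Function.update_self]
        abel
      · rw [Function.update_of_ne (hpriv j hj hji)]
        exact hf j (Finset.mem_erase.2 ⟨hji, hj⟩)

end PPaux

/-- Pagh–Pagh uniformity core. If for the distinct queries `q₁,…,q_m`
there is no nonempty index set `I` on which every value of `h₁` and every value of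
`h₂` appears an even number of times, then for independent uniform `f₁, f₂ : S → R`
the tuple `(f₁(h₁(q_i)) ⊕ f₂(h₂(q_i)))_{i}` is uniform over `R^m`. -/
theorem stmt_5 {D S R : Type*} [Fintype D] [Fintype S] [DecidableEq S]
    [Fintype R] [DecidableEq R] [AddCommGroup R]
    (m : ℕ) (h₁ h₂ : D → S) (q : Fin m → D) (hq : Function.Injective q)
    (hindep : ∀ I : Finset (Fin m), I.Nonempty →
      ¬ ((∀ s : S, Even ((I.filter (fun i => h₁ (q i) = s)).card)) ∧
         (∀ s : S, Even ((I.filter (fun i => h₂ (q i) = s)).card))))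
    (w : Fin m → R) :
    (Finset.univ.filter (fun p : (S → R) × (S → R) =>
        ∀ i, p.1 (h₁ (q i)) + p.2 (h₂ (q i)) = w i)).card
      * (Fintype.card R) ^ m
      = Fintype.card ((S → R) × (S → R)) := by
  classical
  set Φ : (S → R) × (S → R) → (Fin m → R) :=
    fun p => fun i => p.1 (h₁ (q i)) + p.2 (h₂ (q i)) with hΦ
  -- a preimage point for each target
  have hsurj : ∀ w' : Fin m → R, ∃ p : (S → R) × (S → R), Φ p = w' := by
    intro w'
    obtain ⟨f₁, f₂, hf⟩ := pp_surj h₁ h₂ q hindep Finset.univ w'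
    exact ⟨(f₁, f₂), funext fun i => hf i (Finset.mem_univ i)⟩
  choose pre hpre using hsurj
  -- all fibers have the same cardinality
  have hfib : ∀ w' : Fin m → R,
      (Finset.univ.filter fun p => Φ p = w').card
        = (Finset.univ.filter fun p => Φ p = w).card := by
    intro w'
    refine Finset.card_bij' (fun p _ => p - pre w' + pre w)
      (fun p _ => p - pre w + pre w') ?_ ?_ ?_ ?_
    · intro p hp
      rw [Finset.mem_filter] at hp ⊢
      refine ⟨Finset.mem_univ _, ?_⟩
      funext i
      have h1 := congrFun hp.2 i
      have h2 := congrFun (hpre w') i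
      have h3 := congrFun (hpre w) i
      simp only [hΦ, Prod.fst_add, Prod.snd_add, Prod.fst_sub, Prod.snd_sub,
        Pi.add_apply, Pi.sub_apply] at h1 h2 h3 ⊢
      rw [show ∀ a b c d e f : R, (a - b + c) + (d - e + f) = (a + d) - (b + e) + (c + f) by
        intros; abel]
      rw [h1, h2, h3]
      abel
    · intro p hp
      rw [Finset.mem_filter] at hp ⊢
      refine ⟨Finset.mem_univ _, ?_⟩
      funext i
      have h1 := congrFun hp.2 i
      have h2 := congrFun (hpre w') i
      have h3 := congrFun (hpre w) i
      simp only [hΦ, Prod.fst_add, Prod.snd_add, Prod.fst_sub, Prod.snd_sub,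
        Pi.add_apply, Pi.sub_apply] at h1 h2 h3 ⊢
      rw [show ∀ a b c d e f : R, (a - b + c) + (d - e + f) = (a + d) - (b + e) + (c + f) by
        intros; abel]
      rw [h1, h2, h3]
      abel
    · intro p _
      beta_reduce
      abel
    · intro p _
      beta_reduce
      abel
  have hpart : Fintype.card ((S → R) × (S → R))
      = ∑ w' : Fin m → R, (Finset.univ.filter fun p => Φ p = w').card := by
    rw [← Finset.card_univ]
    exact Finset.card_eq_sum_card_fiberwise (fun p _ => Finset.mem_univ (Φ p))
  have hset : (Finset.univ.filter (fun p : (S → R) × (S → R) =>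
      ∀ i, p.1 (h₁ (q i)) + p.2 (h₂ (q i)) = w i))
      = Finset.univ.filter fun p => Φ p = w := by
    apply Finset.filter_congr
    intro p _
    simp [hΦ, funext_iff]
  rw [hset, hpart]
  have : ∑ w' : Fin m → R, (Finset.univ.filter fun p => Φ p = w').card
      = (Fintype.card (Fin m → R)) * (Finset.univ.filter fun p => Φ p = w).card := by
    calc ∑ w' : Fin m → R, (Finset.univ.filter fun p => Φ p = w').card
        = ∑ _w' : Fin m → R, (Finset.univ.filter fun p => Φ p = w).card :=
          Finset.sum_congr rfl fun w' _ => hfib w'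
      _ = _ := by rw [Finset.sum_const, smul_eq_mul, Finset.card_univ]
  rw [this, Fintype.card_fun, Fintype.card_fin, mul_comm]
end

section
/- Let U, V be nonempty finite sets, F = {f_{u,v} : D → R}_{(u,v)∈U×V} a family of functions between finite sets with R nonempty, and BAD ⊆ D* × U a left-monotone set. Fix t ∈ ℕ and suppose that for every sequence q = (q₁,…,q_m) of at most t distinct elements of D: (1) for every u ∈ U with (q, u) ∉ BAD, the tuple (f_{u,v}(q₁),…,f_{u,v}(q_m)), for v uniform in V, is uniform over R^m; and (2) Pr_{u←U}[(q,u) ∈ BAD] ≤ ε. Then for every deterministic adaptive t-query oracle distinguisher D making distinct queries, |Pr_{(u,v)←U×V}[D^{f_{u,v}} = 1] − Pr_{π←Π}[D^π = 1]| ≤ ε, where Π is the uniform distribution over all functions D → R. -/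
/-- Answer transcript of a deterministic adaptive oracle algorithm with next-query
function `nq` against oracle `g`: the list of the first `n` answers. -/
def transcript {D R : Type*} (nq : List R → D) (g : D → R) : ℕ → List R
  | 0 => []
  | n + 1 => transcript nq g n ++ [g (nq (transcript nq g n))]

/-- The queries a deterministic adaptive algorithm makes when fed the answer list
`a`: the `i`-th query is determined by the first `i-1` answers. -/
def queryList {D R : Type*} (nq : List R → D) (a : List R) : List D :=
  (List.range a.length).map (fun i => nq (a.take i))

/-!
For a fixed `u`, every transcript `a` whose query list is not `BAD` for `u` has probability
`|R|^(-t)` both under `f u v` with `v` uniform (hypothesis `h1`) and under a uniform random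
function (the queries are distinct). Both transcript distributions have total mass one, so they
also give the same mass to the `BAD` transcripts; hence for fixed `u` the advantage is at most
the probability that a uniform random function produces a `BAD` transcript. Averaging over `u`
and exchanging the two sums, hypothesis `h2` bounds this by `ε`.
-/

open Finset

section FiniteProbability

variable {W α : Type*} [Fintype W] [DecidableEq α]

noncomputable def pushforwardMass (τ : W → α) (a : α) : ℝ :=
  #{w | τ w = a} / Fintype.card W

theorem pushforwardMass_nonneg (τ : W → α) (a : α) : 0 ≤ pushforwardMass τ a := by
  unfold pushforwardMass; positivity

theorem card_filter_comp_div_eq_sum_pushforwardMass {τ : W → α} {S : Finset α}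
    (hS : ∀ w, τ w ∈ S) (P : α → Prop) [DecidablePred P] :
    (#{w | P (τ w)} : ℝ) / Fintype.card W = ∑ a ∈ S with P a, pushforwardMass τ a := by
  rw [card_eq_sum_card_fiberwise (f := τ) (t := S.filter P)
    (fun w hw => mem_filter.2 ⟨hS w, (mem_filter.1 hw).2⟩), Nat.cast_sum, sum_div]
  refine sum_congr rfl fun a ha => ?_
  rw [filter_filter, pushforwardMass]
  congr 3
  ext w
  simp only [mem_filter, mem_univ, true_and, and_iff_right_iff_imp]
  exact fun hw => hw ▸ (mem_filter.1 ha).2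

theorem sum_pushforwardMass_eq_one [Nonempty W] {τ : W → α} {S : Finset α}
    (hS : ∀ w, τ w ∈ S) : ∑ a ∈ S, pushforwardMass τ a = 1 := by
  have h := card_filter_comp_div_eq_sum_pushforwardMass hS (fun _ => True)
  simp only [filter_true] at h
  rw [← h, card_univ, div_self (by positivity)]

end FiniteProbability

theorem abs_sum_filter_sub_sum_filter_le {α : Type*} {S : Finset α} {μ ν : α → ℝ}
    {B : α → Prop} [DecidablePred B] (hμ : ∀ a ∈ S, 0 ≤ μ a)
    (hν : ∀ a ∈ S, 0 ≤ ν a)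
    (hsum : ∑ a ∈ S, μ a = ∑ a ∈ S, ν a) (hgood : ∀ a ∈ S, ¬ B a → μ a = ν a)
    (P : α → Prop) [DecidablePred P] :
    |∑ a ∈ S with P a, μ a - ∑ a ∈ S with P a, ν a| ≤ ∑ a ∈ S with B a, ν a := by
  have hbad : ∑ a ∈ S with B a, μ a = ∑ a ∈ S with B a, ν a := by
    rw [← sum_filter_add_sum_filter_not S B, ← sum_filter_add_sum_filter_not S B ν,
      sum_congr rfl fun a ha => hgood a (mem_filter.1 ha).1 (mem_filter.1 ha).2] at hsum
    linarith
  rw [sum_filter, sum_filter, ← sum_sub_distrib, abs_le]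
  constructor
  · rw [sum_filter, ← sum_neg_distrib]
    refine sum_le_sum fun a ha => ?_
    rcases em (B a) with hB | hB
    · have := hμ a ha; have := hν a ha; split_ifs <;> linarith
    · simp [hB, hgood a ha hB]
  · rw [← hbad, sum_filter]
    refine sum_le_sum fun a ha => ?_
    rcases em (B a) with hB | hB
    · have := hμ a ha; have := hν a ha; split_ifs <;> linarith
    · simp [hB, hgood a ha hB]

theorem card_filter_prod_div {U V : Type*} [Fintype U] [Fintype V] (P : U → V → Prop)
    [∀ u v, Decidable (P u v)] :
    (#{uv : U × V | P uv.1 uv.2} : ℝ) / (Fintype.card U * Fintype.card V)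
      = (∑ u, (#{v | P u v} : ℝ) / Fintype.card V) / Fintype.card U := by
  rw [← sum_div, div_div, mul_comm (Fintype.card U : ℝ)]
  congr 1
  simp only [card_filter, Nat.cast_sum, Fintype.sum_prod_type]

theorem abs_sum_div_card_sub_le {U : Type*} [Fintype U] [Nonempty U] (x : U → ℝ) (p : ℝ) :
    |(∑ u, x u) / Fintype.card U - p| ≤ (∑ u, |x u - p|) / Fintype.card U := by
  have hU : (0 : ℝ) < Fintype.card U := by exact_mod_cast Fintype.card_pos
  rw [le_div_iff₀ hU, ← abs_of_pos hU, ← abs_mul, abs_of_pos hU, sub_mul,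
    div_mul_cancel₀ _ hU.ne', ← card_univ, mul_comm, ← nsmul_eq_mul, ← sum_const,
    ← sum_sub_distrib]
  exact abs_sum_le_sum_abs _ _

theorem sum_sum_filter_div_card_le {U α : Type*} [Fintype U] [Nonempty U] {S : Finset α}
    {ν : α → ℝ} (hν : ∀ a ∈ S, 0 ≤ ν a) (hν_sum : ∑ a ∈ S, ν a = 1)
    (B : α → U → Prop) [∀ a u, Decidable (B a u)] {ε : ℝ}
    (hB : ∀ a ∈ S, (#{u | B a u} : ℝ) ≤ ε * Fintype.card U) :
    (∑ u, ∑ a ∈ S with B a u, ν a) / Fintype.card U ≤ ε := by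
  rw [div_le_iff₀ (by exact_mod_cast Fintype.card_pos)]
  calc ∑ u, ∑ a ∈ S with B a u, ν a = ∑ a ∈ S, (#{u | B a u} : ℝ) * ν a := by
        simp only [sum_filter, card_filter, Nat.cast_sum, Nat.cast_ite, Nat.cast_one,
          Nat.cast_zero, sum_mul, ite_mul, one_mul, zero_mul]
        exact sum_comm
    _ ≤ ∑ a ∈ S, ε * Fintype.card U * ν a :=
        sum_le_sum fun a ha => mul_le_mul_of_nonneg_right (hB a ha) (hν a ha)
    _ = ε * Fintype.card U := by rw [← mul_sum, hν_sum, mul_one]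

theorem cast_div_eq_inv_of_mul_eq {c n m : ℕ} (h : c * n = m) (hm : m ≠ 0) :
    (c : ℝ) / m = (n : ℝ)⁻¹ :=
  eq_inv_of_mul_eq_one_left <| by
    rw [div_mul_eq_mul_div, ← Nat.cast_mul, h, div_self (Nat.cast_ne_zero.2 hm)]

theorem card_filter_map_eq_map_mul_pow {D R : Type*} [Fintype D] [DecidableEq D] [Fintype R]
    [DecidableEq R] {q : List D} (hq : q.Nodup) (h : D → R) :
    #{g : D → R | q.map g = q.map h} * Fintype.card R ^ q.length = Fintype.card (D → R) := by
  have hpi : ({g | q.map g = q.map h} : Finset (D → R))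
      = Fintype.piFinset fun x => if x ∈ q then {h x} else univ := by
    ext g
    simp only [mem_filter, mem_univ, true_and, List.map_inj_left, Fintype.mem_piFinset]
    refine forall_congr' fun x => ?_
    split_ifs with hx <;> simp [hx]
  have hq_card : #{x | x ∈ q} = q.length := by
    rw [← List.toFinset_card_of_nodup hq]
    congr 1
    ext x; simp
  rw [hpi, Fintype.card_piFinset, Fintype.card_fun]
  simp only [apply_ite card, card_singleton, card_univ, prod_ite, prod_const_one, prod_const,
    one_mul]
  rw [← hq_card, ← pow_add, add_comm, card_filter_add_card_filter_not, card_univ]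

section Transcript

variable {D R : Type*} (nq : List R → D)

theorem transcript_length (g : D → R) (n : ℕ) : (transcript nq g n).length = n := by
  induction n with
  | zero => rfl
  | succ n ih => simp [transcript, ih]

theorem queryList_length (a : List R) : (queryList nq a).length = a.length := by
  simp [queryList]

theorem queryList_append_singleton (b : List R) (r : R) :
    queryList nq (b ++ [r]) = queryList nq b ++ [nq b] := by
  simp only [queryList, List.length_append, List.length_singleton, List.range_succ,
    List.map_append, List.map_singleton, List.take_left]
  congr 1
  exact List.map_congr_left fun i hi =>
    congrArg nq (List.take_append_of_le_length (List.mem_range.1 hi).le)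

theorem transcript_eq_iff (g : D → R) (a : List R) :
    transcript nq g a.length = a ↔ (queryList nq a).map g = a := by
  induction a using List.reverseRecOn with
  | nil => simp [transcript, queryList]
  | append_singleton b r ih =>
    rw [List.length_append, List.length_singleton, transcript, queryList_append_singleton,
      List.map_append, List.map_singleton,
      List.append_singleton_inj, List.append_singleton_inj]
    constructor
    · rintro ⟨hb, hr⟩
      exact ⟨ih.1 hb, hb ▸ hr⟩
    · rintro ⟨hb, hr⟩
      exact ⟨ih.2 hb, (ih.2 hb).symm ▸ hr⟩

end Transcript

section Distinguisher

variable {D R : Type*} [Fintype D] [DecidableEq D] [Fintype R] [DecidableEq R]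
  (nq : List R → D) (t : ℕ)

def reachableTranscripts : Finset (List R) :=
  univ.image fun g : D → R => transcript nq g t

theorem transcript_mem_reachableTranscripts (g : D → R) :
    transcript nq g t ∈ reachableTranscripts nq t :=
  mem_image_of_mem _ (mem_univ g)

theorem length_of_mem_reachableTranscripts {a : List R} (ha : a ∈ reachableTranscripts nq t) :
    a.length = t := by
  obtain ⟨g, -, rfl⟩ := mem_image.1 ha
  exact transcript_length nq g t

theorem pushforwardMass_transcript_eq {a : List R} (ha : a ∈ reachableTranscripts nq t)
    (hq : (queryList nq a).Nodup) :
    pushforwardMass (fun g : D → R => transcript nq g t) a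
      = ((Fintype.card R : ℝ) ^ t)⁻¹ := by
  obtain ⟨g₀, -, hg₀⟩ := mem_image.1 ha
  obtain rfl : a.length = t := hg₀ ▸ transcript_length nq g₀ t
  -- `g₀` answers the queries of `a` by `a`, so we count functions agreeing with `g₀` there
  have hcount := card_filter_map_eq_map_mul_pow hq g₀
  rw [(transcript_eq_iff nq g₀ a).1 hg₀, queryList_length] at hcount
  simp only [← transcript_eq_iff] at hcount
  rw [pushforwardMass, cast_div_eq_inv_of_mul_eq hcount (Fintype.card_pos_iff.2 ⟨g₀⟩).ne',
    Nat.cast_pow]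

theorem abs_prob_sub_prob_uniform_le {W : Type*} [Fintype W] [Nonempty W] (ora : W → D → R)
    (Bad : List R → Prop) [DecidablePred Bad]
    (hdistinct : ∀ a : List R, a.length = t → (queryList nq a).Nodup)
    (hgood : ∀ a : List R, a.length = t → ¬ Bad a →
      #{w | (queryList nq a).map (ora w) = a} * Fintype.card R ^ t = Fintype.card W)
    (P : List R → Prop) [DecidablePred P] :
    |(#{w | P (transcript nq (ora w) t)} : ℝ) / Fintype.card W
        - (#{g : D → R | P (transcript nq g t)} : ℝ) / Fintype.card (D → R)|
      ≤ ∑ a ∈ reachableTranscripts nq t with Bad a,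
          pushforwardMass (fun g : D → R => transcript nq g t) a := by
  obtain ⟨w₀⟩ := ‹Nonempty W›
  have : Nonempty (D → R) := ⟨ora w₀⟩
  set T : (D → R) → List R := fun g => transcript nq g t
  have hT := transcript_mem_reachableTranscripts nq t
  have hlen : ∀ {a}, a ∈ reachableTranscripts nq t → a.length = t :=
    length_of_mem_reachableTranscripts nq t
  have hν : ∀ a ∈ reachableTranscripts nq t,
      pushforwardMass T a = ((Fintype.card R : ℝ) ^ t)⁻¹ :=
    fun a ha => pushforwardMass_transcript_eq nq t ha (hdistinct a (hlen ha))
  have hμ : ∀ a ∈ reachableTranscripts nq t, ¬ Bad a →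
      pushforwardMass (fun w => T (ora w)) a = ((Fintype.card R : ℝ) ^ t)⁻¹ := by
    intro a ha hbad
    have hT_eq : ∀ g, T g = a ↔ (queryList nq a).map g = a := fun g => by
      rw [← transcript_eq_iff, hlen ha]
    simp only [pushforwardMass, hT_eq]
    rw [cast_div_eq_inv_of_mul_eq (hgood a (hlen ha) hbad) Fintype.card_ne_zero, Nat.cast_pow]
  rw [card_filter_comp_div_eq_sum_pushforwardMass (τ := fun w => T (ora w)) (fun w => hT _),
    card_filter_comp_div_eq_sum_pushforwardMass hT]
  refine abs_sum_filter_sub_sum_filter_le (fun a _ => pushforwardMass_nonneg _ a)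
    (fun a _ => pushforwardMass_nonneg _ a) ?_
    (fun a ha hbad => (hμ a ha hbad).trans (hν a ha).symm) P
  rw [sum_pushforwardMass_eq_one (fun w => hT _), sum_pushforwardMass_eq_one hT]

end Distinguisher

theorem stmt_8_general {U V D R : Type*} [Fintype U] [Fintype V] [Fintype D] [Fintype R]
    [Nonempty U] [Nonempty V] [DecidableEq D] [DecidableEq R]
    (f : U → V → D → R) (BAD : List D → U → Prop) [∀ s u, Decidable (BAD s u)]
    (t : ℕ) (ε : ℝ)
    (h1 : ∀ q : List D, q.length ≤ t → q.Nodup → ∀ u : U, ¬ BAD q u →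
      ∀ ys : List R, ys.length = q.length →
        (Finset.univ.filter (fun v : V => q.map (f u v) = ys)).card
          * (Fintype.card R) ^ q.length = Fintype.card V)
    (h2 : ∀ q : List D, q.length ≤ t → q.Nodup →
      ((Finset.univ.filter (fun u : U => BAD q u)).card : ℝ) ≤ ε * Fintype.card U)
    (nq : List R → D) (out : List R → Bool)
    (hdistinct : ∀ a : List R, a.length ≤ t → (queryList nq a).Nodup) :
    |((Finset.univ.filter (fun uv : U × V =>
          out (transcript nq (f uv.1 uv.2) t) = true)).card : ℝ)
        / (Fintype.card U * Fintype.card V)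
      - ((Finset.univ.filter (fun g : D → R =>
          out (transcript nq g t) = true)).card : ℝ)
        / Fintype.card (D → R)| ≤ ε := by
  have : Nonempty (D → R) := ⟨f (Classical.arbitrary U) (Classical.arbitrary V)⟩
  have hgood : ∀ u, ∀ a : List R, a.length = t → ¬ BAD (queryList nq a) u →
      #{v | (queryList nq a).map (f u v) = a} * Fintype.card R ^ t = Fintype.card V := by
    intro u a ha hbad
    have hq : (queryList nq a).length = t := (queryList_length nq a).trans ha
    simpa only [hq] using h1 _ hq.le (hdistinct a ha.le) u hbad a (ha.trans hq.symm)
  rw [card_filter_prod_div (fun u v => out (transcript nq (f u v) t) = true)]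
  calc _ ≤ _ := abs_sum_div_card_sub_le _ _
    _ ≤ (∑ u, ∑ a ∈ reachableTranscripts nq t with BAD (queryList nq a) u,
          pushforwardMass (fun g : D → R => transcript nq g t) a) / Fintype.card U := by
        gcongr with u
        exact abs_prob_sub_prob_uniform_le nq t (f u) (fun a => BAD (queryList nq a) u)
          (fun a ha => hdistinct a ha.le) (hgood u) (fun a => out a = true)
    _ ≤ ε := by
        refine sum_sum_filter_div_card_le (fun a _ => pushforwardMass_nonneg _ a)
          (sum_pushforwardMass_eq_one (transcript_mem_reachableTranscripts nq t)) _ ?_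
        intro a ha
        have hlen := length_of_mem_reachableTranscripts nq t ha
        exact h2 _ (by rw [queryList_length, hlen]) (hdistinct a hlen.le)

/-- framework lemma: Let `f : U × V → (D → R)` be a function family and
`BAD` a left-monotone set of (query-sequence, `u`) pairs. Assume that for every
sequence of at most `t` distinct queries: (1) for every `u` with `(q, u) ∉ BAD`, the
answers under uniform `v ∈ V` are uniform over `R^{|q|}`; and (2) the probability
over uniform `u ∈ U` that `(q, u) ∈ BAD` is at most `ε`. Then every deterministic
adaptive `t`-query distinguisher making distinct queries distinguishes `f_{u,v}`
(uniform `(u,v)`) from a uniform function with advantage at most `ε`. -/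
theorem stmt_8 {U V D R : Type*} [Fintype U] [Fintype V] [Fintype D] [Fintype R]
    [Nonempty U] [Nonempty V] [Nonempty R] [DecidableEq D] [DecidableEq R]
    (f : U → V → D → R) (BAD : List D → U → Prop) [∀ s u, Decidable (BAD s u)]
    (hmono : ∀ (s₁ : List D) (u : U), BAD s₁ u → ∀ s₂ : List D, s₁ <+: s₂ → BAD s₂ u)
    (t : ℕ) (ε : ℝ)
    (h1 : ∀ q : List D, q.length ≤ t → q.Nodup → ∀ u : U, ¬ BAD q u →
      ∀ ys : List R, ys.length = q.length →
        (Finset.univ.filter (fun v : V => q.map (f u v) = ys)).card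
          * (Fintype.card R) ^ q.length = Fintype.card V)
    (h2 : ∀ q : List D, q.length ≤ t → q.Nodup →
      ((Finset.univ.filter (fun u : U => BAD q u)).card : ℝ) ≤ ε * Fintype.card U)
    (nq : List R → D) (out : List R → Bool)
    (hdistinct : ∀ a : List R, a.length ≤ t → (queryList nq a).Nodup) :
    |((Finset.univ.filter (fun uv : U × V =>
          out (transcript nq (f uv.1 uv.2) t) = true)).card : ℝ)
        / (Fintype.card U * Fintype.card V)
      - ((Finset.univ.filter (fun g : D → R =>
          out (transcript nq g t) = true)).card : ℝ)
        / Fintype.card (D → R)| ≤ ε :=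
  stmt_8_general f BAD t ε h1 h2 nq out hdistinct
end

section
/- Let S be a finite set, R a finite abelian group, and Π the uniform distribution over functions S → R. Let m₁,…,m_z and m′₁,…,m′_z be functions U → S and h, h′ : D → S, g₁,…,g_z : D → U fixed functions. If, for a tuple of distinct queries q₁,…,q_k ∈ D, the k vectors over GF(2) indexed by S ⊔ S given by (e_{a(q_i)}, e_{a′(q_i)}) are linearly independent—where a(x) = h(x) ⊕ ⊕_j m_j(g_j(x)) and a′(x) = h′(x) ⊕ ⊕_j m′_j(g_j(x))—then for f₁, f₂ uniform and independent over all functions S → R and any fixed ℓ-part, the tuple (F(q₁),…,F(q_k)) with F(x) = f₁(a(x)) ⊕ f₂(a′(x)) is uniform over R^k. -/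
private lemma fiber_card {G H : Type*} [Fintype G] [AddCommGroup G]
    [Fintype H] [AddCommGroup H] [DecidableEq H]
    (φ : G →+ H) (hs : Function.Surjective φ) (t : H) :
    (Finset.univ.filter (fun g => φ g = t)).card * Fintype.card H = Fintype.card G := by
  classical
  have key : ∀ t₁ t₂ : H, (Finset.univ.filter (fun g => φ g = t₁)).card
      = (Finset.univ.filter (fun g => φ g = t₂)).card := by
    intro t₁ t₂
    obtain ⟨g₀, hg₀⟩ := hs (t₂ - t₁)
    apply Finset.card_bij (fun a _ => a + g₀)
    · intro a ha
      simp only [Finset.mem_filter, Finset.mem_univ, true_and] at ha ⊢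
      rw [map_add, ha, hg₀]; abel
    · intro a _ b _ hab; exact add_right_cancel hab
    · intro b hb
      simp only [Finset.mem_filter, Finset.mem_univ, true_and] at hb
      refine ⟨b - g₀, ?_, by abel⟩
      simp only [Finset.mem_filter, Finset.mem_univ, true_and, map_sub, hb, hg₀]
      abel
  have hsum : Fintype.card G = ∑ t' : H, (Finset.univ.filter (fun g => φ g = t')).card := by
    rw [← Finset.card_univ]
    exact Finset.card_eq_sum_card_fiberwise (fun g _ => Finset.mem_univ (φ g))
  rw [hsum, Finset.sum_congr rfl (fun t' _ => key t' t)]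
  simp [Finset.sum_const, Finset.card_univ, mul_comm]

/-- ADW uniformity core: with `a(x) = h(x) ⊕ ⊕_j m_j(g_j(x))` and
`a'(x) = h'(x) ⊕ ⊕_j m'_j(g_j(x))`, if for the distinct queries `q₁,…,q_k` the
GF(2)-vectors `(e_{a(q_i)}, e_{a'(q_i)})`, indexed by `S ⊔ S`, are linearly
independent, then for independent uniform `f₁, f₂ : S → R` and any fixed `ℓ`-part
`L : D → R`, the tuple `(F(q_i))_i` with `F(x) = f₁(a(x)) ⊕ f₂(a'(x)) ⊕ L(x)` is
uniform over `R^k`. -/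
theorem stmt_16 {D S U' R : Type*} [Fintype D] [Fintype S] [DecidableEq S]
    [AddCommGroup S] [Fintype R] [DecidableEq R] [AddCommGroup R]
    (z k : ℕ) (h h' : D → S) (m m' : Fin z → U' → S) (g : Fin z → D → U')
    (L : D → R) (q : Fin k → D) (hq : Function.Injective q)
    (a a' : D → S)
    (ha : a = fun x => h x + ∑ j : Fin z, m j (g j x))
    (ha' : a' = fun x => h' x + ∑ j : Fin z, m' j (g j x))
    (hlin : LinearIndependent (ZMod 2) (fun i : Fin k =>
      Sum.elim (fun s : S => if s = a (q i) then (1 : ZMod 2) else 0)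
        (fun s : S => if s = a' (q i) then (1 : ZMod 2) else 0)))
    (ys : Fin k → R) :
    (Finset.univ.filter (fun p : (S → R) × (S → R) =>
        ∀ i, p.1 (a (q i)) + p.2 (a' (q i)) + L (q i) = ys i)).card
      * (Fintype.card R) ^ k
      = Fintype.card ((S → R) × (S → R)) := by
  classical
  set v : Fin k → (S ⊕ S → ZMod 2) := fun i =>
    Sum.elim (fun s : S => if s = a (q i) then (1 : ZMod 2) else 0)
      (fun s : S => if s = a' (q i) then (1 : ZMod 2) else 0) with hv
  let f : (Fin k → ZMod 2) →ₗ[ZMod 2] (S ⊕ S → ZMod 2) :=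
    { toFun := fun c => ∑ i, c i • v i
      map_add' := by intro c d; simp [add_smul, Finset.sum_add_distrib]
      map_smul' := by intro r c; simp [mul_smul, Finset.smul_sum] }
  have hker : LinearMap.ker f = ⊥ := by
    rw [LinearMap.ker_eq_bot']
    intro c hc
    have hc' : ∑ i, c i • v i = 0 := hc
    have := Fintype.linearIndependent_iff.mp hlin c hc'
    funext i; exact this i
  obtain ⟨r, hr⟩ := f.exists_leftInverse_of_injective hker
  set w : Fin k → (S ⊕ S) → ZMod 2 := fun i s => r (Pi.single s 1) i with hw
  have hvj : ∀ j, v j = Pi.single (Sum.inl (a (q j))) (1 : ZMod 2)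
      + Pi.single (Sum.inr (a' (q j))) 1 := by
    intro j
    funext s
    cases s with
    | inl s => simp [hv, Pi.single_apply]
    | inr s => simp [hv, Pi.single_apply]
  have hdual : ∀ i j, w i (Sum.inl (a (q j))) + w i (Sum.inr (a' (q j)))
      = if i = j then 1 else 0 := by
    intro i j
    have h1 : f (Pi.single j 1) = v j := by
      rw [show f (Pi.single j 1) = ∑ i, (Pi.single j 1 : Fin k → ZMod 2) i • v i from rfl,
        Finset.sum_eq_single j (fun b _ hb => by simp [Pi.single_apply, hb])
          (fun hj => absurd (Finset.mem_univ j) hj)]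
      simp
    have h2 : r (v j) = Pi.single j 1 := by
      rw [← h1]
      exact LinearMap.congr_fun hr (Pi.single j 1)
    calc w i (Sum.inl (a (q j))) + w i (Sum.inr (a' (q j)))
        = (r (Pi.single (Sum.inl (a (q j))) 1) + r (Pi.single (Sum.inr (a' (q j))) 1)) i := rfl
      _ = r (v j) i := by rw [← map_add, ← hvj]
      _ = if i = j then 1 else 0 := by rw [h2, Pi.single_apply]
  -- integer coefficients
  set d : Fin k → Fin k → ℤ := fun j i =>
    ((w i (Sum.inl (a (q j)))).val : ℤ) - ((w i (Sum.inr (a' (q j)))).val : ℤ) with hd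
  have hval : ∀ u : ZMod 2, u = 0 ∨ u = 1 := by decide
  have hoff : ∀ i j, i ≠ j → d j i = 0 := by
    intro i j hij
    have h0 := hdual i j
    rw [if_neg hij] at h0
    simp only [hd]
    rcases hval (w i (Sum.inl (a (q j)))) with h1 | h1 <;>
      rcases hval (w i (Sum.inr (a' (q j)))) with h2 | h2 <;>
        rw [h1, h2] at h0 ⊢ <;>
        first
          | (exact absurd h0 (by decide))
          | decide
  have hdiag : ∀ j, d j j = 1 ∨ d j j = -1 := by
    intro j
    have h0 := hdual j j
    rw [if_pos rfl] at h0
    simp only [hd]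
    rcases hval (w j (Sum.inl (a (q j)))) with h1 | h1 <;>
      rcases hval (w j (Sum.inr (a' (q j)))) with h2 | h2 <;>
        rw [h1, h2] at h0 ⊢ <;>
        first
          | (exact absurd h0 (by decide))
          | (left; decide)
          | (right; decide)
  -- the group hom
  let T : (S → R) × (S → R) →+ (Fin k → R) :=
    { toFun := fun p i => p.1 (a (q i)) + p.2 (a' (q i))
      map_zero' := by funext i; simp
      map_add' := by
        intro p p'; funext i
        simp only [Prod.fst_add, Prod.snd_add, Pi.add_apply]
        abel }
  have hTsurj : Function.Surjective T := by
    intro t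
    set c : Fin k → R := fun i => d i i • t i with hc
    refine ⟨(fun s => ∑ i, ((w i (Sum.inl s)).val : ℤ) • c i,
            fun s => -∑ i, ((w i (Sum.inr s)).val : ℤ) • c i), ?_⟩
    funext j
    show (∑ i, ((w i (Sum.inl (a (q j)))).val : ℤ) • c i)
        + (-∑ i, ((w i (Sum.inr (a' (q j)))).val : ℤ) • c i) = t j
    rw [← sub_eq_add_neg, ← Finset.sum_sub_distrib]
    have hterm : ∀ i ∈ Finset.univ, ((w i (Sum.inl (a (q j)))).val : ℤ) • c i
        - ((w i (Sum.inr (a' (q j)))).val : ℤ) • c i = d j i • c i := by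
      intro i _; rw [hd, sub_smul]
    rw [Finset.sum_congr rfl hterm,
      Finset.sum_eq_single j (fun i _ hij => by rw [hoff i j hij, zero_smul])
        (fun hj => absurd (Finset.mem_univ j) hj)]
    show d j j • (d j j • t j) = t j
    rw [smul_smul]
    rcases hdiag j with h1 | h1 <;> rw [h1] <;> simp
  have hfc := fiber_card T hTsurj (fun i => ys i - L (q i))
  have hfilter : (Finset.univ.filter (fun p : (S → R) × (S → R) =>
      ∀ i, p.1 (a (q i)) + p.2 (a' (q i)) + L (q i) = ys i))
      = (Finset.univ.filter (fun p : (S → R) × (S → R) =>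
          T p = fun i => ys i - L (q i))) := by
    apply Finset.filter_congr
    intro p _
    rw [funext_iff]
    exact forall_congr' fun i => (eq_sub_iff_add_eq).symm
  rw [hfilter]
  have hcard : Fintype.card (Fin k → R) = (Fintype.card R) ^ k := by
    simp [Fintype.card_fun]
  rw [← hcard]
  exact hfc
end
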